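/- arXiv:1112.3353 — 4 statements merged into one kernel-verified Lean document; each statement's English description precedes it below -/
import Mathlib

section
/- Every finite simple graph admits an EPG representation, i.e., an assignment of finite non-self-intersecting paths in the rectangular planar grid to its vertices such that two distinct vertices are adjacent if and only if their paths share at least one grid edge. -/
/-!
Give every vertex a monotone staircase path that crosses the antidiagonal `x + y = t` at height
`g t`, where the height profile `g : ℕ → ℕ` rises by at most one per step. Such a path never
reuses a grid edge, and two of them share a grid edge exactly when their heights agree at two
consecutive times, so it suffices to schedule height profiles.

Start from distinct heights below `L` and treat the edges one at a time: for the edge `ab`, the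
vertices `a` and `b` climb vertically to the fresh level `L` and run together there for one step,
after which `a` moves up to `L + 1`, while every other vertex keeps its height. A climbing path
meets a horizontal one in at most a point, so no other pair runs together, and the heights are
again distinct, now below `L + 2`.
-/

/-- A step between two grid points is a unit step (horizontal or vertical). -/
def unitStep (a b : ℤ × ℤ) : Prop :=
  (a.1 = b.1 ∧ (a.2 - b.2).natAbs = 1) ∨ (a.2 = b.2 ∧ (a.1 - b.1).natAbs = 1)

/-- A finite non-self-intersecting (in grid edges) path in the planar grid. -/
structure GridPath where
  pts : List (ℤ × ℤ)
  nonempty : pts ≠ []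
  chain : pts.Chain' unitStep
  edges_nodup : ((pts.zip pts.tail).map fun ab => Sym2.mk ab.1 ab.2).Nodup

/-- The list of steps (consecutive pairs of points) of a grid path. -/
def GridPath.steps (P : GridPath) : List ((ℤ × ℤ) × (ℤ × ℤ)) := P.pts.zip P.pts.tail

/-- The list of grid edges used by a grid path. -/
def GridPath.edges (P : GridPath) : List (Sym2 (ℤ × ℤ)) := P.steps.map fun ab => Sym2.mk ab.1 ab.2

/-- Whether a step is horizontal. -/
def stepHoriz (ab : (ℤ × ℤ) × (ℤ × ℤ)) : Bool := ab.1.2 == ab.2.2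

/-- The number of bends of a grid path: positions where a horizontal edge is followed
by a vertical one or vice versa. -/
def GridPath.bends (P : GridPath) : ℕ :=
  ((P.steps.zip P.steps.tail).filter fun st => stepHoriz st.1 != stepHoriz st.2).length

/-- An EPG representation: distinct vertices are adjacent iff their paths share a grid edge. -/
def IsEPGRep {V : Type*} (G : SimpleGraph V) (P : V → GridPath) : Prop :=
  ∀ u v : V, u ≠ v → (G.Adj u v ↔ ∃ e, e ∈ (P u).edges ∧ e ∈ (P v).edges)

/-- `G` has an EPG representation all of whose paths have at most `k` bends. -/
def HasKBendRep {V : Type*} (G : SimpleGraph V) (k : ℕ) : Prop :=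
  ∃ P : V → GridPath, IsEPGRep G P ∧ ∀ v, (P v).bends ≤ k

/-- The bend-number of a graph. -/
noncomputable def bendNumber {V : Type*} (G : SimpleGraph V) : ℕ :=
  sInf {k | HasKBendRep G k}

open Function

def staircasePoint (g : ℕ → ℕ) (t : ℕ) : ℤ × ℤ := ((t : ℤ) - g t, g t)

def staircaseEdge (g : ℕ → ℕ) (t : ℕ) : Sym2 (ℤ × ℤ) :=
  s(staircasePoint g t, staircasePoint g (t + 1))

def IsStaircase (g : ℕ → ℕ) : Prop := ∀ t, g (t + 1) = g t ∨ g (t + 1) = g t + 1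

def RunTogether (N : ℕ) (g h : ℕ → ℕ) : Prop := ∃ i < N, g i = h i ∧ g (i + 1) = h (i + 1)

def edgeLevel : Sym2 (ℤ × ℤ) → ℤ :=
  Sym2.lift ⟨fun p q => min (p.1 + p.2) (q.1 + q.2), fun _ _ => min_comm _ _⟩

lemma edgeLevel_staircaseEdge (g : ℕ → ℕ) (t : ℕ) : edgeLevel (staircaseEdge g t) = t := by
  simp [edgeLevel, staircaseEdge, staircasePoint]

lemma staircaseEdge_eq_iff {g h : ℕ → ℕ} {i j : ℕ} :
    staircaseEdge g i = staircaseEdge h j ↔ i = j ∧ g i = h i ∧ g (i + 1) = h (i + 1) := by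
  constructor
  · intro hij
    have hlevel : (i : ℤ) = j := by
      simpa only [edgeLevel_staircaseEdge] using congrArg edgeLevel hij
    obtain rfl : i = j := by exact_mod_cast hlevel
    rcases Sym2.eq_iff.1 hij with ⟨h₀, h₁⟩ | ⟨h₀, -⟩
    · exact ⟨rfl, by simpa [staircasePoint] using h₀, by simpa [staircasePoint] using h₁⟩
    · have := congrArg (fun p : ℤ × ℤ => p.1 + p.2) h₀
      simp only [staircasePoint] at this
      omega
  · rintro ⟨rfl, h₀, h₁⟩
    simp [staircaseEdge, staircasePoint, h₀, h₁]

lemma zip_tail_map_range {α : Type*} (f : ℕ → α) (N : ℕ) :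
    ((List.range (N + 1)).map f).zip ((List.range (N + 1)).map f).tail =
      (List.range N).map fun i => (f i, f (i + 1)) := by
  apply List.ext_getElem <;> simp

def staircase (g : ℕ → ℕ) (hg : IsStaircase g) (N : ℕ) : GridPath where
  pts := (List.range (N + 1)).map (staircasePoint g)
  nonempty := by simp
  chain := by
    show List.IsChain _ _
    rw [List.isChain_map, List.isChain_range_succ]
    intro t _
    rcases hg t with h | h <;>
      · simp only [unitStep, staircasePoint, h, true_and]
        omega
  edges_nodup := by
    rw [zip_tail_map_range, List.map_map]
    show (List.map (staircaseEdge g) (List.range N)).Nodup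
    refine List.Nodup.of_map edgeLevel ?_
    simp only [List.map_map, comp_def, edgeLevel_staircaseEdge]
    exact List.nodup_range.map Nat.cast_injective

lemma staircase_edges (g : ℕ → ℕ) (hg : IsStaircase g) (N : ℕ) :
    (staircase g hg N).edges = (List.range N).map (staircaseEdge g) := by
  simp only [GridPath.edges, GridPath.steps, staircase, zip_tail_map_range, List.map_map]
  rfl

lemma staircase_shares_edge_iff {g h : ℕ → ℕ} (hg : IsStaircase g) (hh : IsStaircase h)
    (N : ℕ) :
    (∃ e, e ∈ (staircase g hg N).edges ∧ e ∈ (staircase h hh N).edges) ↔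
      RunTogether N g h := by
  simp only [staircase_edges, List.mem_map, List.mem_range]
  constructor
  · rintro ⟨_, ⟨i, hi, rfl⟩, j, -, hji⟩
    obtain ⟨rfl, h₀, h₁⟩ := staircaseEdge_eq_iff.1 hji
    exact ⟨j, hi, h₀.symm, h₁.symm⟩
  · rintro ⟨i, hi, h₀, h₁⟩
    exact ⟨_, ⟨i, hi, rfl⟩, i, hi, staircaseEdge_eq_iff.2 ⟨rfl, h₀.symm, h₁.symm⟩⟩

lemma RunTogether.symm {N : ℕ} {g h : ℕ → ℕ} (hgh : RunTogether N g h) : RunTogether N h g :=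
  let ⟨i, hi, h₀, h₁⟩ := hgh
  ⟨i, hi, h₀.symm, h₁.symm⟩

lemma not_runTogether_of_climbs_below {N L c : ℕ} {g : ℕ → ℕ}
    (hg : ∀ t, g t < L → g (t + 1) = g t + 1) (hc : c < L) : ¬ RunTogether N g fun _ => c := by
  rintro ⟨i, -, h₀, h₁⟩
  dsimp only at h₀ h₁
  have := hg i (h₀ ▸ hc)
  omega

def concatAt (N : ℕ) (g₁ g₂ : ℕ → ℕ) (t : ℕ) : ℕ := if t ≤ N then g₁ t else g₂ (t - N)

section concatAt
variable {N : ℕ} {g₁ g₂ : ℕ → ℕ} {t : ℕ}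

lemma concatAt_of_le (ht : t ≤ N) : concatAt N g₁ g₂ t = g₁ t := if_pos ht

lemma concatAt_of_ge (hg : g₂ 0 = g₁ N) (ht : N ≤ t) : concatAt N g₁ g₂ t = g₂ (t - N) := by
  unfold concatAt
  split_ifs with h
  · obtain rfl : t = N := le_antisymm h ht
    simp [hg]
  · rfl

lemma IsStaircase.concatAt (h₁ : IsStaircase g₁) (h₂ : IsStaircase g₂) (hg : g₂ 0 = g₁ N) :
    IsStaircase (concatAt N g₁ g₂) := by
  intro t
  rcases lt_or_ge t N with ht | ht
  · rw [concatAt_of_le ht.le, concatAt_of_le ht]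
    exact h₁ t
  · rw [concatAt_of_ge hg ht, concatAt_of_ge hg (by omega), show t + 1 - N = t - N + 1 by omega]
    exact h₂ _

lemma runTogether_concatAt {M : ℕ} {h₁ h₂ : ℕ → ℕ} (hg : g₂ 0 = g₁ N) (hh : h₂ 0 = h₁ N) :
    RunTogether (N + M) (concatAt N g₁ g₂) (concatAt N h₁ h₂) ↔
      RunTogether N g₁ h₁ ∨ RunTogether M g₂ h₂ := by
  constructor
  · rintro ⟨i, hi, e₀, e₁⟩
    rcases lt_or_ge i N with hiN | hiN
    · rw [concatAt_of_le hiN.le, concatAt_of_le hiN.le] at e₀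
      rw [concatAt_of_le hiN, concatAt_of_le hiN] at e₁
      exact Or.inl ⟨i, hiN, e₀, e₁⟩
    · rw [concatAt_of_ge hg hiN, concatAt_of_ge hh hiN] at e₀
      rw [concatAt_of_ge hg (by omega), concatAt_of_ge hh (by omega),
        show i + 1 - N = i - N + 1 by omega] at e₁
      exact Or.inr ⟨i - N, by omega, e₀, e₁⟩
  · rintro (⟨i, hi, e₀, e₁⟩ | ⟨i, hi, e₀, e₁⟩)
    · refine ⟨i, by omega, ?_, ?_⟩
      · rwa [concatAt_of_le hi.le, concatAt_of_le hi.le]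
      · rwa [concatAt_of_le hi, concatAt_of_le hi]
    · refine ⟨N + i, by omega, ?_, ?_⟩
      · rwa [concatAt_of_ge hg (by omega), concatAt_of_ge hh (by omega), Nat.add_sub_cancel_left]
      · rwa [concatAt_of_ge hg (by omega), concatAt_of_ge hh (by omega), Nat.add_assoc,
          Nat.add_sub_cancel_left]

end concatAt

structure RealizesEdges {V : Type*} (es : List (Sym2 V)) (s : V → ℕ) (N : ℕ) (g : V → ℕ → ℕ) :
    Prop where
  isStaircase : ∀ v, IsStaircase (g v)
  start : ∀ v, g v 0 = s v
  runTogether_iff : ∀ u v, u ≠ v → (RunTogether N (g u) (g v) ↔ s(u, v) ∈ es)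

namespace RealizesEdges
variable {V : Type*} {es₁ es₂ : List (Sym2 V)} {s : V → ℕ} {N₁ N₂ : ℕ} {g₁ g₂ : V → ℕ → ℕ}

lemma nil (s : V → ℕ) : RealizesEdges [] s 0 fun v _ => s v where
  isStaircase _ _ := Or.inl rfl
  start _ := rfl
  runTogether_iff _ _ _ := by simp [RunTogether]

lemma append (h₁ : RealizesEdges es₁ s N₁ g₁) (h₂ : RealizesEdges es₂ (fun v => g₁ v N₁) N₂ g₂) :
    RealizesEdges (es₁ ++ es₂) s (N₁ + N₂) fun v => concatAt N₁ (g₁ v) (g₂ v) where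
  isStaircase v := (h₁.isStaircase v).concatAt (h₂.isStaircase v) (h₂.start v)
  start v := by rw [concatAt_of_le (Nat.zero_le _), h₁.start]
  runTogether_iff u v huv := by
    rw [runTogether_concatAt (h₂.start u) (h₂.start v), h₁.runTogether_iff u v huv,
      h₂.runTogether_iff u v huv, List.mem_append]

end RealizesEdges

section Stage
variable {V : Type*} [DecidableEq V] {s : V → ℕ} {L : ℕ} {a b : V}

def stageHeight (s : V → ℕ) (L : ℕ) (a b v : V) (t : ℕ) : ℕ :=
  if v = a then (if t ≤ L + 1 then min (s a + t) L else L + 1)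
  else if v = b then min (s b + t) L else s v

lemma stageHeight_left (t : ℕ) :
    stageHeight s L a b a t = if t ≤ L + 1 then min (s a + t) L else L + 1 := if_pos rfl

lemma stageHeight_right (hab : a ≠ b) (t : ℕ) : stageHeight s L a b b t = min (s b + t) L := by
  simp [stageHeight, hab.symm]

lemma stageHeight_of_ne {v : V} (ha : v ≠ a) (hb : v ≠ b) :
    stageHeight s L a b v = fun _ => s v := by
  ext t
  simp [stageHeight, ha, hb]

lemma isStaircase_stageHeight (v : V) : IsStaircase (stageHeight s L a b v) := by
  intro t
  unfold stageHeight
  split_ifs <;> omega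

lemma stageHeight_zero (hL : ∀ v, s v < L) (v : V) : stageHeight s L a b v 0 = s v := by
  have := hL a
  have := hL b
  unfold stageHeight
  split_ifs <;> subst_vars <;> omega

lemma stageHeight_climbs (hab : a ≠ b) {v : V} (hv : v = a ∨ v = b) (t : ℕ)
    (ht : stageHeight s L a b v t < L) :
    stageHeight s L a b v (t + 1) = stageHeight s L a b v t + 1 := by
  rcases hv with rfl | rfl
  · simp only [stageHeight_left] at ht ⊢
    split_ifs at ht ⊢ <;> omega
  · simp only [stageHeight_right hab] at ht ⊢
    omega

lemma stageHeight_final (v : V) :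
    stageHeight s L a b v (L + 2) = if v = a then L + 1 else if v = b then L else s v := by
  unfold stageHeight
  split_ifs <;> omega

lemma stageHeight_final_lt (hL : ∀ v, s v < L) (v : V) :
    stageHeight s L a b v (L + 2) < L + 2 := by
  have := hL v
  rw [stageHeight_final]
  split_ifs <;> omega

lemma injective_stageHeight_final (hs : Injective s) (hL : ∀ v, s v < L) (hab : a ≠ b) :
    Injective fun v => stageHeight s L a b v (L + 2) := by
  intro u v huv
  have := hL u
  have := hL v
  simp only [stageHeight_final] at huv
  split_ifs at huv <;> first | (subst_vars; rfl) | omega | exact hs huv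

lemma realizesEdges_stage (hs : Injective s) (hL : ∀ v, s v < L) (hab : a ≠ b) :
    RealizesEdges [s(a, b)] s (L + 2) (stageHeight s L a b) where
  isStaircase := isStaircase_stageHeight
  start := stageHeight_zero hL
  runTogether_iff u v huv := by
    rw [List.mem_singleton]
    constructor
    · intro hrun
      by_cases hu : u = a ∨ u = b <;> by_cases hv : v = a ∨ v = b
      · rcases hu with rfl | rfl <;> rcases hv with rfl | rfl <;> simp_all [Sym2.eq_swap]
      · rw [stageHeight_of_ne (v := v) (by tauto) (by tauto)] at hrun
        exact absurd hrun (not_runTogether_of_climbs_below (stageHeight_climbs hab hu) (hL v))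
      · rw [stageHeight_of_ne (v := u) (by tauto) (by tauto)] at hrun
        exact absurd hrun.symm (not_runTogether_of_climbs_below (stageHeight_climbs hab hv) (hL u))
      · obtain ⟨i, -, h₀, -⟩ := hrun
        rw [stageHeight_of_ne (v := u) (by tauto) (by tauto),
          stageHeight_of_ne (v := v) (by tauto) (by tauto)] at h₀
        exact absurd (hs h₀) huv
    · intro huv_eq
      have hmeet : RunTogether (L + 2) (stageHeight s L a b a) (stageHeight s L a b b) := by
        have := hL a
        have := hL b
        refine ⟨L, by omega, ?_, ?_⟩ <;>
          simp only [stageHeight_left, stageHeight_right hab] <;> split_ifs <;> omega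
      rcases Sym2.eq_iff.1 huv_eq with ⟨rfl, rfl⟩ | ⟨rfl, rfl⟩
      exacts [hmeet, hmeet.symm]

end Stage

theorem exists_realizesEdges {V : Type*} [DecidableEq V] (es : List (Sym2 V))
    (hes : ∀ e ∈ es, ¬ e.IsDiag) (s : V → ℕ) (hs : Injective s) (L : ℕ) (hL : ∀ v, s v < L) :
    ∃ N g, RealizesEdges es s N g := by
  induction es generalizing s L with
  | nil => exact ⟨0, _, RealizesEdges.nil s⟩
  | cons e es ih =>
    induction e using Sym2.ind with
    | h a b =>
      have hab : a ≠ b := fun h => hes _ List.mem_cons_self (Sym2.mk_isDiag_iff.2 h)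
      obtain ⟨N, g, hg⟩ := ih (fun e he => hes e (List.mem_cons_of_mem _ he)) _
        (injective_stageHeight_final hs hL hab) (L + 2) (stageHeight_final_lt hL)
      exact ⟨_, _, (realizesEdges_stage hs hL hab).append hg⟩

/-- Every finite simple graph admits an EPG representation. -/
theorem every_finite_graph_has_EPG_representation
    {V : Type*} [Fintype V] (G : SimpleGraph V) :
    ∃ P : V → GridPath, IsEPGRep G P := by
  classical
  obtain ⟨N, g, hg⟩ := exists_realizesEdges G.edgeFinset.toList
    (fun e he => G.not_isDiag_of_mem_edgeSet (by simpa using he))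
    (fun v => Fintype.equivFin V v) (Fin.val_injective.comp (Fintype.equivFin V).injective)
    (Fintype.card V) fun v => (Fintype.equivFin V v).isLt
  refine ⟨fun v => staircase (g v) (hg.isStaircase v) N, fun u v huv => ?_⟩
  rw [staircase_shares_edge_iff, hg.runTogether_iff u v huv]
  simp
end

section
/- For every n ≥ 5, the complete bipartite graph K_{2,n} has bend-number exactly 2. -/
/-!
A path with at most one bend is an L-shape: a horizontal and a vertical segment sharing an
endpoint. In a representation of `K_{2,n}` by L-shapes, each of the `n` paths of the large side
shares an edge with both paths `a`, `b` of the small side, and so has a type: the direction along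
which it meets `a` and the one along which it meets `b`. If `a` and `b` share a row or a column,
two paths of the same type would share an edge, so `n ≤ 4`; otherwise only the two mixed types
occur, and three paths of the same mixed type cannot be pairwise edge-disjoint, so again `n ≤ 4`.
Conversely, two horizontal lines at heights `0` and `1` together with `n` disjoint two-bend caps
represent `K_{2,n}`.
-/

theorem HasKBendRep.mono {V : Type*} {G : SimpleGraph V} {k l : ℕ} (h : HasKBendRep G k)
    (hkl : k ≤ l) : HasKBendRep G l :=
  let ⟨P, hrep, hbends⟩ := h
  ⟨P, hrep, fun v => (hbends v).trans hkl⟩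

theorem bendNumber_eq_of_hasKBendRep {V : Type*} {G : SimpleGraph V} {k : ℕ}
    (h : HasKBendRep G (k + 1)) (h' : ¬ HasKBendRep G k) : bendNumber G = k + 1 := by
  refine le_antisymm (Nat.sInf_le h) (le_csInf ⟨_, h⟩ fun l hl => ?_)
  by_contra hlt
  exact h' (hl.mono (by omega))

def hEdge (x y : ℤ) : Sym2 (ℤ × ℤ) := s((x, y), (x + 1, y))

def vEdge (x y : ℤ) : Sym2 (ℤ × ℤ) := s((x, y), (x, y + 1))

@[simp] lemma hEdge_inj {x y x' y' : ℤ} : hEdge x y = hEdge x' y' ↔ x = x' ∧ y = y' := by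
  simp only [hEdge, Sym2.eq_iff, Prod.ext_iff]; omega

@[simp] lemma vEdge_inj {x y x' y' : ℤ} : vEdge x y = vEdge x' y' ↔ x = x' ∧ y = y' := by
  simp only [vEdge, Sym2.eq_iff, Prod.ext_iff]; omega

@[simp] lemma hEdge_ne_vEdge (x y x' y' : ℤ) : hEdge x y ≠ vEdge x' y' := by
  simp only [hEdge, vEdge, ne_eq, Sym2.eq_iff, Prod.ext_iff]; omega

@[simp] lemma vEdge_ne_hEdge (x y x' y' : ℤ) : vEdge x y ≠ hEdge x' y' :=
  (hEdge_ne_vEdge x' y' x y).symm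

namespace List

variable {α β : Type*}

lemma isChain_iff_forall_mem_zip_tail {R : α → α → Prop} :
    ∀ {l : List α}, l.IsChain R ↔ ∀ u ∈ l.zip l.tail, R u.1 u.2
  | [] | [_] => by simp
  | a :: b :: l => by
    rw [isChain_cons_cons, isChain_iff_forall_mem_zip_tail]
    simp

lemma IsChain.eq_of_mem {f : α → β} {l : List α} (h : l.IsChain fun x y => f x = f y)
    {a b : α} (ha : a ∈ l) (hb : b ∈ l) : f a = f b := by
  rw [← isChain_map f] at h
  exact h.pairwise.forall_of_forall (fun _ _ => rfl) (mem_map_of_mem ha) (mem_map_of_mem hb)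

lemma zip_tail_append_cons (o : α) (V : List α) : ∀ H : List α,
    (H ++ o :: V).zip (H ++ o :: V).tail = (H ++ [o]).zip (H ++ [o]).tail ++ (o :: V).zip V
  | [] => by simp
  | [_] => by simp
  | a :: b :: H => by
    have := zip_tail_append_cons o V (b :: H)
    simp_all

def changes (f : α → Bool) (l : List α) : ℕ :=
  ((l.zip l.tail).filter fun st => f st.1 != f st.2).length

lemma changes_eq_zero_iff {f : α → Bool} {l : List α} :
    changes f l = 0 ↔ l.IsChain fun x y => f x = f y := by
  simp [changes, isChain_iff_forall_mem_zip_tail]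

lemma changes_cons_cons (f : α → Bool) (a b : α) (l : List α) :
    changes f (a :: b :: l) = (if f a = f b then 0 else 1) + changes f (b :: l) := by
  by_cases h : f a = f b <;> simp [changes, h, Nat.add_comm]

theorem exists_append_of_changes_le_one (f : α → Bool) : ∀ l : List α, changes f l ≤ 1 →
    ∃ l₁ l₂ c, l = l₁ ++ l₂ ∧ (∀ x ∈ l₁, f x = c) ∧ ∀ x ∈ l₂, f x = !c
  | [] => fun _ => ⟨[], [], true, by simp⟩
  | [a] => fun _ => ⟨[a], [], f a, by simp⟩
  | a :: b :: l => fun h => by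
    rw [changes_cons_cons] at h
    by_cases hab : f a = f b
    · obtain ⟨l₁, l₂, c, hl, h₁, h₂⟩ :=
        exists_append_of_changes_le_one f (b :: l) (by simpa [hab] using h)
      cases l₁ with
      | nil =>
        refine ⟨a :: b :: l, [], !c, by simp, ?_, by simp⟩
        simp only [nil_append] at hl
        simp only [hl] at h₂ ⊢
        intro x hx
        rcases mem_cons.1 hx with rfl | hx
        · exact hab.trans (h₂ b (hl ▸ mem_cons_self))
        · exact h₂ x hx
      | cons x l₁ =>
        obtain ⟨rfl, rfl⟩ : b = x ∧ l = l₁ ++ l₂ := by simpa using hl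
        refine ⟨a :: b :: l₁, l₂, c, rfl, ?_, h₂⟩
        intro y hy
        rcases mem_cons.1 hy with rfl | hy
        · exact hab.trans (h₁ _ mem_cons_self)
        · exact h₁ y hy
    · have hl : (b :: l).IsChain fun x y => f x = f y :=
        changes_eq_zero_iff.1 (by simpa [hab] using h)
      refine ⟨[a], b :: l, f a, rfl, by simp, fun x hx => ?_⟩
      rw [hl.eq_of_mem hx mem_cons_self]
      cases hfa : f a <;> cases hfb : f b <;> simp_all

lemma exists_append_cons_of_zip_tail_eq_append {l : List α} (hl : l ≠ [])
    {s₁ s₂ : List (α × α)} (h : l.zip l.tail = s₁ ++ s₂) :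
    ∃ H o V, l = H ++ o :: V ∧ (H ++ [o]).zip (H ++ [o]).tail = s₁ ∧ (o :: V).zip V = s₂ := by
  have hk : s₁.length < l.length := by
    have := congrArg List.length h
    simp only [List.length_zip, List.length_tail, List.length_append] at this
    have := List.length_pos_iff.2 hl
    omega
  have hsplit : l = l.take s₁.length ++ l[s₁.length] :: l.drop (s₁.length + 1) := by
    rw [List.getElem_cons_drop, List.take_append_drop]
  refine ⟨_, _, _, hsplit, List.append_inj ?_ ?_⟩
  · rw [← List.zip_tail_append_cons, ← hsplit, h]
  · simp only [List.length_zip, List.length_tail, List.length_append, List.length_take,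
      List.length_singleton]
    omega

lemma zip_tail_map_range (f : ℕ → α) (m : ℕ) :
    ((List.range (m + 1)).map f).zip ((List.range (m + 1)).map f).tail =
      (List.range m).map fun i => (f i, f (i + 1)) := by
  apply List.ext_getElem <;> simp

end List

/-- Edges `{x, x + 1}` of `ℤ` are recorded by their lower end `x`. A `±1` walk that never reuses
an edge is monotone, so it covers exactly the edges between its endpoints. -/
theorem Int.mem_map_min_zip_tail_iff {xs : List ℤ}
    (hchain : xs.IsChain fun x y => (x - y).natAbs = 1)
    (hnd : ((xs.zip xs.tail).map fun p => min p.1 p.2).Nodup) {a z : ℤ}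
    (ha : xs.head? = some a) (hz : xs.getLast? = some z) (x : ℤ) :
    x ∈ (xs.zip xs.tail).map (fun p => min p.1 p.2) ↔ min a z ≤ x ∧ x < max a z := by
  obtain ⟨t, rfl⟩ : ∃ t, xs = a :: t := ⟨xs.tail, (List.cons_head?_tail ha).symm⟩
  induction t generalizing a x with
  | nil =>
    obtain rfl : a = z := by simpa using hz
    simp
  | cons b t ih =>
    rw [List.isChain_cons_cons] at hchain
    rw [List.getLast?_cons_cons] at hz
    simp only [List.tail_cons, List.zip_cons_cons, List.map_cons, List.nodup_cons] at hnd ⊢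
    have hrest := fun y => ih y hchain.2 hnd.2 rfl hz
    simp only [List.tail_cons] at hrest
    have hfresh := hnd.1
    rw [hrest] at hfresh
    rw [List.mem_cons, hrest x]
    have := hchain.1
    omega

def pathEdges (l : List (ℤ × ℤ)) : List (Sym2 (ℤ × ℤ)) :=
  (l.zip l.tail).map fun ab => s(ab.1, ab.2)

lemma GridPath.edges_eq_pathEdges (P : GridPath) : P.edges = pathEdges P.pts := rfl

lemma mk_eq_hEdge_min {p q : ℤ × ℤ} (h : unitStep p q) (hpq : p.2 = q.2) :
    s(p, q) = hEdge (min p.1 q.1) p.2 := by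
  unfold unitStep at h
  simp only [hEdge, Sym2.eq_iff, Prod.ext_iff, and_true] at h hpq ⊢
  omega

lemma mk_eq_vEdge_min {p q : ℤ × ℤ} (h : unitStep p q) (hpq : p.1 = q.1) :
    s(p, q) = vEdge p.1 (min p.2 q.2) := by
  unfold unitStep at h
  simp only [vEdge, Sym2.eq_iff, Prod.ext_iff, true_and] at h hpq ⊢
  omega

lemma mem_pathEdges_of_straight {l : List (ℤ × ℤ)} (π : ℤ × ℤ → ℤ) {g : ℤ → Sym2 (ℤ × ℤ)}
    (hstep : ∀ u ∈ l.zip l.tail,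
      (π u.1 - π u.2).natAbs = 1 ∧ s(u.1, u.2) = g (min (π u.1) (π u.2)))
    (hnd : (pathEdges l).Nodup) {a z : ℤ × ℤ} (ha : l.head? = some a) (hz : l.getLast? = some z)
    (e : Sym2 (ℤ × ℤ)) :
    e ∈ pathEdges l ↔ ∃ x, min (π a) (π z) ≤ x ∧ x < max (π a) (π z) ∧ e = g x := by
  have hedges : pathEdges l =
      (((l.map π).zip (l.map π).tail).map fun p => min p.1 p.2).map g := by
    rw [pathEdges, ← List.map_tail, List.zip_map, List.map_map, List.map_map]
    exact List.map_congr_left fun u hu => (hstep u hu).2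
  have hchain : (l.map π).IsChain fun x y => (x - y).natAbs = 1 :=
    (List.isChain_map π).2 (List.isChain_iff_forall_mem_zip_tail.2 fun u hu => (hstep u hu).1)
  rw [hedges] at hnd ⊢
  have hmem := Int.mem_map_min_zip_tail_iff hchain (hnd.of_map g)
    (by simp [ha] : (l.map π).head? = some (π a))
    (by simp [List.getLast?_map, hz] : (l.map π).getLast? = some (π z))
  rw [List.mem_map]
  constructor
  · rintro ⟨x, hx, rfl⟩
    exact ⟨x, ((hmem x).1 hx).1, ((hmem x).1 hx).2, rfl⟩
  · rintro ⟨x, h₁, h₂, rfl⟩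
    exact ⟨x, (hmem x).2 ⟨h₁, h₂⟩, rfl⟩

lemma mem_pathEdges_of_forall_snd_eq {l : List (ℤ × ℤ)} (hchain : l.IsChain unitStep) {c : ℤ}
    (hrow : ∀ p ∈ l, p.2 = c) (hnd : (pathEdges l).Nodup) {a z : ℤ × ℤ} (ha : l.head? = some a)
    (hz : l.getLast? = some z) (e : Sym2 (ℤ × ℤ)) :
    e ∈ pathEdges l ↔ ∃ x, min a.1 z.1 ≤ x ∧ x < max a.1 z.1 ∧ e = hEdge x c := by
  refine mem_pathEdges_of_straight Prod.fst (fun u hu => ?_) hnd ha hz e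
  have hu₁ := hrow _ (List.of_mem_zip hu).1
  have hu₂ := hrow _ (List.mem_of_mem_tail (List.of_mem_zip hu).2)
  have hstep := List.isChain_iff_forall_mem_zip_tail.1 hchain u hu
  refine ⟨?_, by rw [mk_eq_hEdge_min hstep (hu₁.trans hu₂.symm), hu₁]⟩
  unfold unitStep at hstep
  omega

lemma mem_pathEdges_of_forall_fst_eq {l : List (ℤ × ℤ)} (hchain : l.IsChain unitStep) {c : ℤ}
    (hcol : ∀ p ∈ l, p.1 = c) (hnd : (pathEdges l).Nodup) {a z : ℤ × ℤ} (ha : l.head? = some a)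
    (hz : l.getLast? = some z) (e : Sym2 (ℤ × ℤ)) :
    e ∈ pathEdges l ↔ ∃ y, min a.2 z.2 ≤ y ∧ y < max a.2 z.2 ∧ e = vEdge c y := by
  refine mem_pathEdges_of_straight Prod.snd (fun u hu => ?_) hnd ha hz e
  have hu₁ := hcol _ (List.of_mem_zip hu).1
  have hu₂ := hcol _ (List.mem_of_mem_tail (List.of_mem_zip hu).2)
  have hstep := List.isChain_iff_forall_mem_zip_tail.1 hchain u hu
  refine ⟨?_, by rw [mk_eq_vEdge_min hstep (hu₁.trans hu₂.symm), hu₁]⟩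
  unfold unitStep at hstep
  omega

lemma pathEdges_append_cons (H V : List (ℤ × ℤ)) (o : ℤ × ℤ) :
    pathEdges (H ++ o :: V) = pathEdges (H ++ [o]) ++ pathEdges (o :: V) := by
  rw [pathEdges, List.zip_tail_append_cons, List.map_append]
  rfl

lemma snd_eq_of_forall_stepHoriz {l : List (ℤ × ℤ)} (h : ∀ u ∈ l.zip l.tail, stepHoriz u = true)
    {o p : ℤ × ℤ} (ho : o ∈ l) (hp : p ∈ l) : p.2 = o.2 :=
  (List.isChain_iff_forall_mem_zip_tail.2 fun u hu => by simpa [stepHoriz] using h u hu).eq_of_mem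
    hp ho

lemma fst_eq_of_forall_not_stepHoriz {l : List (ℤ × ℤ)} (hchain : l.IsChain unitStep)
    (h : ∀ u ∈ l.zip l.tail, stepHoriz u = false) {o p : ℤ × ℤ} (ho : o ∈ l) (hp : p ∈ l) :
    p.1 = o.1 := by
  refine (List.isChain_iff_forall_mem_zip_tail.2 fun u hu => ?_).eq_of_mem hp ho
  have hstep := List.isChain_iff_forall_mem_zip_tail.1 hchain u hu
  have hv : u.1.2 ≠ u.2.2 := by simpa [stepHoriz] using h u hu
  unfold unitStep at hstep
  omega

lemma GridPath.exists_corner (P : GridPath) (h : P.bends ≤ 1) :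
    ∃ H o V b, P.pts = H ++ o :: V ∧ (∀ u ∈ (H ++ [o]).zip (H ++ [o]).tail, stepHoriz u = b) ∧
      ∀ u ∈ (o :: V).zip V, stepHoriz u = !b := by
  obtain ⟨s₁, s₂, b, hs, h₁, h₂⟩ := List.exists_append_of_changes_le_one stepHoriz P.steps h
  obtain ⟨H, o, V, hpts, rfl, rfl⟩ := List.exists_append_cons_of_zip_tail_eq_append P.nonempty hs
  exact ⟨H, o, V, b, hpts, h₁, h₂⟩

/-- The horizontal segment `[left, right] × {row}` and the vertical segment `{col} × [bottom, top]`,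
joined at their common endpoint `(col, row)`. -/
structure LShape where
  col : ℤ
  row : ℤ
  left : ℤ
  right : ℤ
  bottom : ℤ
  top : ℤ
  left_le_right : left ≤ right
  bottom_le_top : bottom ≤ top
  col_mem : col = left ∨ col = right
  row_mem : row = bottom ∨ row = top

def LShape.edgeSet (L : LShape) : Set (Sym2 (ℤ × ℤ)) :=
  {e | (∃ x, L.left ≤ x ∧ x < L.right ∧ e = hEdge x L.row) ∨
    (∃ y, L.bottom ≤ y ∧ y < L.top ∧ e = vEdge L.col y)}

theorem GridPath.exists_lShape (P : GridPath) (h : P.bends ≤ 1) :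
    ∃ L : LShape, ∀ e, e ∈ P.edges ↔ e ∈ L.edgeSet := by
  obtain ⟨H, o, V, b, hpts, hH, hV⟩ := P.exists_corner h
  have hchain : (H ++ o :: V).IsChain unitStep := hpts ▸ P.chain
  have hchainH : (H ++ [o]).IsChain unitStep := hchain.prefix ⟨V, by simp⟩
  have hchainV : (o :: V).IsChain unitStep := hchain.suffix ⟨H, rfl⟩
  have hnd : (pathEdges (H ++ [o]) ++ pathEdges (o :: V)).Nodup := by
    rw [← pathEdges_append_cons, ← hpts]
    exact P.edges_nodup
  rw [List.nodup_append] at hnd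
  have hedges : ∀ e, e ∈ P.edges ↔ e ∈ pathEdges (H ++ [o]) ∨ e ∈ pathEdges (o :: V) := by
    intro e
    rw [P.edges_eq_pathEdges, hpts, pathEdges_append_cons, List.mem_append]
  obtain ⟨a, ha⟩ : ∃ a, (H ++ [o]).head? = some a := by cases H <;> simp
  obtain ⟨z, hz⟩ : ∃ z, (o :: V).getLast? = some z := ⟨_, List.getLast?_eq_some_getLast (by simp)⟩
  have hoH : (H ++ [o]).getLast? = some o := by simp
  have hoV : (o :: V).head? = some o := rfl
  have hoH' : o ∈ H ++ [o] := by simp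
  have hoV' : o ∈ o :: V := List.mem_cons_self
  cases b
  · refine ⟨⟨o.1, o.2, min o.1 z.1, max o.1 z.1, min a.2 o.2, max a.2 o.2,
      by omega, by omega, by omega, by omega⟩, fun e => ?_⟩
    rw [hedges, mem_pathEdges_of_forall_fst_eq hchainH
        (fun p hp => fst_eq_of_forall_not_stepHoriz hchainH hH hoH' hp) hnd.1 ha hoH,
      mem_pathEdges_of_forall_snd_eq hchainV
        (fun p hp => snd_eq_of_forall_stepHoriz hV hoV' hp) hnd.2.1 hoV hz]
    exact or_comm
  · refine ⟨⟨o.1, o.2, min a.1 o.1, max a.1 o.1, min o.2 z.2, max o.2 z.2,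
      by omega, by omega, by omega, by omega⟩, fun e => ?_⟩
    rw [hedges, mem_pathEdges_of_forall_snd_eq hchainH
        (fun p hp => snd_eq_of_forall_stepHoriz hH hoH' hp) hnd.1 ha hoH,
      mem_pathEdges_of_forall_fst_eq hchainV
        (fun p hp => fst_eq_of_forall_not_stepHoriz hchainV hV hoV' hp) hnd.2.1 hoV hz]
    rfl

namespace LShape

def MeetsAlong : Bool → LShape → LShape → Prop
  | true, L, M => L.row = M.row ∧ max L.left M.left < min L.right M.right
  | false, L, M => L.col = M.col ∧ max L.bottom M.bottom < min L.top M.top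

def Meets (L M : LShape) : Prop := ∃ horiz, L.MeetsAlong horiz M

theorem exists_mem_edgeSet_iff_meets (L M : LShape) :
    (∃ e, e ∈ L.edgeSet ∧ e ∈ M.edgeSet) ↔ L.Meets M := by
  constructor
  · rintro ⟨e, hL, hM⟩
    rcases hL with ⟨x, hx₁, hx₂, rfl⟩ | ⟨y, hy₁, hy₂, rfl⟩ <;>
      rcases hM with ⟨x', hx₁', hx₂', he⟩ | ⟨y', hy₁', hy₂', he⟩ <;>
      simp only [hEdge_inj, vEdge_inj, hEdge_ne_vEdge, vEdge_ne_hEdge] at he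
    · exact ⟨true, he.2, by omega⟩
    · exact ⟨false, he.1, by omega⟩
  · rintro ⟨_ | _, hline, hov⟩
    · exact ⟨vEdge L.col (max L.bottom M.bottom), Or.inr ⟨_, by omega, by omega, rfl⟩,
        Or.inr ⟨max L.bottom M.bottom, by omega, by omega, by rw [hline]⟩⟩
    · exact ⟨hEdge (max L.left M.left) L.row, Or.inl ⟨_, by omega, by omega, rfl⟩,
        Or.inl ⟨max L.left M.left, by omega, by omega, by rw [hline]⟩⟩

def Links (τ : Bool × Bool) (a b M : LShape) : Prop := M.MeetsAlong τ.1 a ∧ M.MeetsAlong τ.2 b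

variable {a b M₁ M₂ M₃ : LShape} {τ : Bool × Bool}

lemma aligned_of_links_of_eq {M : LShape} {h : Bool} (hM : Links (h, h) a b M) :
    a.row = b.row ∨ a.col = b.col := by
  cases h <;> simp only [Links, MeetsAlong] at hM <;> omega

theorem meets_of_links_of_aligned (hab : ¬ a.Meets b) (haligned : a.row = b.row ∨ a.col = b.col)
    (h₁ : Links τ a b M₁) (h₂ : Links τ a b M₂) : M₁.Meets M₂ := by
  obtain ⟨_ | _, _ | _⟩ := τ <;>
  · cases a; cases b; cases M₁; cases M₂
    simp only [Meets, Links, MeetsAlong, Bool.exists_bool, max_lt_iff, lt_min_iff,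
      not_or, not_and] at *
    omega

theorem meets_of_links_three {h : Bool} (h₁ : Links (h, !h) a b M₁) (h₂ : Links (h, !h) a b M₂)
    (h₃ : Links (h, !h) a b M₃) : M₁.Meets M₂ ∨ M₁.Meets M₃ ∨ M₂.Meets M₃ := by
  cases h <;>
  · cases M₁; cases M₂; cases M₃
    simp only [Meets, Links, MeetsAlong, Bool.exists_bool, Bool.not_false, Bool.not_true,
      max_lt_iff, lt_min_iff] at *
    omega


theorem card_le_four {ι : Type*} [Fintype ι] {a b : LShape} {M : ι → LShape}
    (hab : ¬ a.Meets b) (hM : Pairwise fun i j => ¬ (M i).Meets (M j))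
    (ha : ∀ i, (M i).Meets a) (hb : ∀ i, (M i).Meets b) : Fintype.card ι ≤ 4 := by
  choose τa hτa using ha
  choose τb hτb using hb
  have hlinks : ∀ i, Links (τa i, τb i) a b (M i) := fun i => ⟨hτa i, hτb i⟩
  by_cases haligned : a.row = b.row ∨ a.col = b.col
  · have hinj : Function.Injective fun i => (τa i, τb i) := by
      intro i j hij
      by_contra hne
      have hj := hlinks j
      rw [← show (τa i, τb i) = (τa j, τb j) from hij] at hj
      exact hM hne (meets_of_links_of_aligned hab haligned (hlinks i) hj)
    simpa using Fintype.card_le_of_injective _ hinj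
  · have hmixed : ∀ i, τb i = !τa i := by
      intro i
      by_contra hne
      have hτ : τb i = τa i := by revert hne; cases τa i <;> cases τb i <;> simp
      exact haligned (aligned_of_links_of_eq (hτ ▸ hlinks i))
    by_contra hcard
    obtain ⟨h, hfib⟩ := Fintype.exists_lt_card_fiber_of_mul_lt_card (f := τa) (n := 2)
      (by simp only [Fintype.card_bool]; omega)
    obtain ⟨i, j, k, hi, hj, hk, hij, hik, hjk⟩ := Finset.two_lt_card_iff.1 hfib
    simp only [Finset.mem_filter, Finset.mem_univ, true_and] at hi hj hk
    have hlinks' : ∀ l, τa l = h → Links (h, !h) a b (M l) := fun l hl => by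
      simpa [hmixed l, hl] using hlinks l
    rcases meets_of_links_three (hlinks' i hi) (hlinks' j hj) (hlinks' k hk) with
      h | h | h
    exacts [hM hij h, hM hik h, hM hjk h]

end LShape

theorem card_le_four_of_hasKBendRep_one {ι : Type*} [Fintype ι]
    (h : HasKBendRep (completeBipartiteGraph (Fin 2) ι) 1) : Fintype.card ι ≤ 4 := by
  obtain ⟨P, hrep, hbends⟩ := h
  choose L hL using fun v => (P v).exists_lShape (hbends v)
  have hadj : ∀ u v, u ≠ v →
      ((completeBipartiteGraph (Fin 2) ι).Adj u v ↔ (L u).Meets (L v)) := by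
    intro u v huv
    rw [hrep u v huv, ← LShape.exists_mem_edgeSet_iff_meets]
    simp only [hL]
  refine LShape.card_le_four (a := L (.inl 0)) (b := L (.inl 1)) (M := fun i => L (.inr i))
    ?_ ?_ (fun i => ?_) (fun i => ?_)
  · rw [← hadj _ _ (by simp)]
    simp
  · intro i j hij
    rw [← hadj _ _ (by simpa using hij)]
    simp
  all_goals
    rw [← hadj _ _ (by simp)]
    simp

lemma pathEdges_map_range (y : ℤ) (m : ℕ) :
    pathEdges ((List.range (m + 1)).map fun i : ℕ => ((i : ℤ), y)) =
      (List.range m).map fun i : ℕ => hEdge i y := by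
  rw [pathEdges, List.zip_tail_map_range, List.map_map]
  simp [hEdge]

def rowPath (y : ℤ) (m : ℕ) : GridPath where
  pts := (List.range (m + 1)).map fun i : ℕ => ((i : ℤ), y)
  nonempty := by simp
  chain := by
    refine List.isChain_iff_forall_mem_zip_tail.2 ?_
    rw [List.zip_tail_map_range]
    simp [unitStep]
  edges_nodup := by
    rw [← pathEdges, pathEdges_map_range]
    exact List.nodup_range.map fun i j h => by simpa using h

lemma rowPath_edges (y : ℤ) (m : ℕ) :
    (rowPath y m).edges = (List.range m).map fun i : ℕ => hEdge i y :=
  pathEdges_map_range y m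

lemma rowPath_bends (y : ℤ) (m : ℕ) : (rowPath y m).bends = 0 := by
  have hsteps : (rowPath y m).steps =
      (List.range m).map fun i : ℕ => (((i : ℤ), y), ((i : ℤ) + 1, y)) := by
    rw [GridPath.steps, rowPath, List.zip_tail_map_range]
    simp
  rw [GridPath.bends, List.length_eq_zero_iff, List.filter_eq_nil_iff]
  intro st hst
  have h₁ := (List.of_mem_zip hst).1
  have h₂ := List.mem_of_mem_tail (List.of_mem_zip hst).2
  rw [hsteps, List.mem_map] at h₁ h₂
  obtain ⟨i, -, hi⟩ := h₁
  obtain ⟨j, -, hj⟩ := h₂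
  simp [stepHoriz, ← hi, ← hj]

lemma pathEdges_cap (x : ℤ) :
    pathEdges [(x, 0), (x + 1, 0), (x + 1, 1), (x, 1)] =
      [hEdge x 0, vEdge (x + 1) 0, hEdge x 1] := by
  simp [pathEdges, hEdge, vEdge, Sym2.eq_swap]

def capPath (x : ℤ) : GridPath where
  pts := [(x, 0), (x + 1, 0), (x + 1, 1), (x, 1)]
  nonempty := by simp
  chain := by
    show List.IsChain _ _
    simp [unitStep]
  edges_nodup := by
    rw [← pathEdges, pathEdges_cap]
    simp

lemma capPath_edges (x : ℤ) : (capPath x).edges = [hEdge x 0, vEdge (x + 1) 0, hEdge x 1] :=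
  pathEdges_cap x

lemma capPath_bends (x : ℤ) : (capPath x).bends ≤ 2 :=
  (List.length_filter_le _ _).trans (by simp [GridPath.steps, capPath])

theorem hasKBendRep_two (n : ℕ) : HasKBendRep (completeBipartiteGraph (Fin 2) (Fin n)) 2 := by
  refine ⟨Sum.elim (fun y => rowPath y n) (fun i => capPath i), ?_, ?_⟩
  · rintro (y | i) (y' | j) hne <;>
      simp only [ne_eq, Sum.inl.injEq, Sum.inr.injEq, Fin.ext_iff, reduceCtorEq] at hne <;>
      simp [rowPath_edges, capPath_edges]
    · omega
    · exact ⟨j, j.isLt, by fin_cases y <;> simp⟩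
    · fin_cases y' <;> simp
    · omega
  · rintro (y | i)
    · simp [rowPath_bends]
    · exact capPath_bends i

/-- For every `n ≥ 5`, the complete bipartite graph `K_{2,n}` has bend-number exactly 2. -/
theorem bendNumber_completeBipartite_two (n : ℕ) (hn : 5 ≤ n) :
    bendNumber (completeBipartiteGraph (Fin 2) (Fin n)) = 2 := by
  refine bendNumber_eq_of_hasKBendRep (hasKBendRep_two n) fun h => ?_
  have := card_le_four_of_hasKBendRep_one h
  rw [Fintype.card_fin] at this
  omega
end

section
/- In any EPG representation of K_{2,n} with 2-bend paths, at most 12 vertices of the n-element bipartition class realize both of their edges (to the two vertices of the 2-element class) using the same segment or two consecutive segments of their path. -/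
/-- The maximal straight segments of a grid path. -/
def GridPath.segs (P : GridPath) : List (List ((ℤ × ℤ) × (ℤ × ℤ))) :=
  P.steps.splitBy fun s t => stepHoriz s == stepHoriz t

/-- The grid edges lying on the `i`-th segment of a grid path. -/
def segEdges (P : GridPath) (i : ℕ) : List (Sym2 (ℤ × ℤ)) :=
  (P.segs.getD i []).map fun ab => Sym2.mk ab.1 ab.2

/-- The path `Pw` realizes its edges with `Pu` and `Pv` on one common segment or on
two consecutive segments: all grid edges shared with `Pu` or `Pv` lie on two such segments. -/
def RealizesOnCloseSegments (Pw Pu Pv : GridPath) : Prop :=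
  ∃ i j : ℕ, i < Pw.segs.length ∧ j < Pw.segs.length ∧ (i = j ∨ i + 1 = j ∨ j + 1 = i) ∧
    ∀ e ∈ Pw.edges, (e ∈ Pu.edges ∨ e ∈ Pv.edges) →
      (e ∈ segEdges Pw i ∨ e ∈ segEdges Pw j)

namespace List

variable {α : Type*}

theorem isChain_zip_tail :
    ∀ l : List α, (l.zip l.tail).IsChain fun s t => s.2 = t.1
  | [] | [_] | [_, _] => by simp
  | a :: b :: c :: l => by simpa using isChain_zip_tail (b :: c :: l)

theorem IsChain.rel_of_mem_zip_tail {R : α → α → Prop} :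
    ∀ {l : List α}, l.IsChain R → ∀ s ∈ l.zip l.tail, R s.1 s.2
  | [], _, _, hs | [_], _, _, hs => by simp at hs
  | a :: b :: l, h, s, hs => by
    rw [isChain_cons_cons] at h
    simp only [tail_cons, zip_cons_cons, mem_cons] at hs
    rcases hs with rfl | hs
    · exact h.1
    · exact h.2.rel_of_mem_zip_tail s hs

variable (r : α → α → Bool)

def breaks (l : List α) : ℕ := ((l.zip l.tail).filter fun p => !r p.1 p.2).length

lemma breaks_cons_cons (a b : α) (l : List α) :
    (a :: b :: l).breaks r = (if r a b then 0 else 1) + (b :: l).breaks r := by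
  cases h : r a b <;> simp [breaks, h, add_comm]

lemma breaks_append_ge {g m : List α} (hg : g ≠ []) (hm : m ≠ [])
    (h : r (g.getLast hg) (m.head hm) = false) : m.breaks r + 1 ≤ (g ++ m).breaks r := by
  induction g with
  | nil => contradiction
  | cons a g ih =>
    cases g with
    | nil =>
      obtain ⟨b, m, rfl⟩ := exists_cons_of_ne_nil hm
      simp_all [breaks_cons_cons]
    | cons b g =>
      have := ih (cons_ne_nil _ _) (by simpa using h)
      rw [cons_append, cons_append, breaks_cons_cons, ← cons_append]
      omega

lemma length_le_breaks_flatten :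
    ∀ {L : List (List α)}, [] ∉ L →
      (L.IsChain fun a b => ∃ ha hb, r (a.getLast ha) (b.head hb) = false) →
      L.length ≤ L.flatten.breaks r + 1
  | [], _, _ | [_], _, _ => by simp
  | g :: g' :: L, hnil, hc => by
    rw [isChain_cons_cons] at hc
    obtain ⟨hg, hg', hr⟩ := hc.1
    have ih := length_le_breaks_flatten (fun h => hnil (mem_cons_of_mem _ h)) hc.2
    have hne : (g' :: L).flatten ≠ [] := by simp [hg']
    have := breaks_append_ge r hg hne (by simpa [head_append_of_ne_nil hg'] using hr)
    simp only [flatten_cons, length_cons] at *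
    omega

theorem length_splitBy_le (l : List α) : (l.splitBy r).length ≤ l.breaks r + 1 := by
  simpa [flatten_splitBy] using
    length_le_breaks_flatten r (nil_notMem_splitBy r l) (isChain_getLast_head_splitBy r l)

end List

/-- The point at coordinate `x` on the grid line `c`; the line is `y = c` if `b` (horizontal)
and `x = c` otherwise. -/
def linePt (b : Bool) (c x : ℤ) : ℤ × ℤ := if b then (x, c) else (c, x)

def coordAlong (b : Bool) (p : ℤ × ℤ) : ℤ := if b then p.1 else p.2

def lineEdge (b : Bool) (c x : ℤ) : Sym2 (ℤ × ℤ) := s(linePt b c x, linePt b c (x + 1))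

@[simp] lemma coordAlong_linePt (b : Bool) (c x : ℤ) : coordAlong b (linePt b c x) = x := by
  cases b <;> rfl

@[simp] lemma coordAlong_not_linePt (b : Bool) (c x : ℤ) : coordAlong (!b) (linePt b c x) = c := by
  cases b <;> rfl

lemma linePt_inj {b : Bool} {c x c' x' : ℤ} :
    linePt b c x = linePt b c' x' ↔ c = c' ∧ x = x' := by
  cases b <;> simp [linePt, and_comm]

lemma linePt_eq_linePt_not {b : Bool} {c x c' x' : ℤ} :
    linePt b c x = linePt (!b) c' x' ↔ x = c' ∧ c = x' := by
  cases b <;> simp [linePt, and_comm]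

lemma lineEdge_inj {b b' : Bool} {c x c' x' : ℤ} (h : lineEdge b c x = lineEdge b' c' x') :
    b = b' ∧ c = c' ∧ x = x' := by
  cases b <;> cases b' <;> simp [lineEdge, linePt] at h ⊢ <;> omega

lemma stepHoriz_linePt (b : Bool) (c a σ : ℤ) (hσ : σ ≠ 0) :
    stepHoriz (linePt b c a, linePt b c (a + σ)) = b := by
  cases b <;> simp [stepHoriz, linePt, hσ]

lemma exists_linePt_of_unitStep {s : (ℤ × ℤ) × (ℤ × ℤ)} (hs : unitStep s.1 s.2) :
    ∃ c a σ : ℤ, (σ = 1 ∨ σ = -1) ∧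
      s = (linePt (stepHoriz s) c a, linePt (stepHoriz s) c (a + σ)) := by
  obtain ⟨⟨x, y⟩, ⟨x', y'⟩⟩ := s
  rcases hs with ⟨h1, h2⟩ | ⟨h1, h2⟩ <;> simp only at h1 h2 <;> subst h1
  · have : stepHoriz ((x, y), (x, y')) = false := by simp [stepHoriz]; omega
    exact ⟨x, y, y' - y, by omega, by simp [this, linePt]⟩
  · have : stepHoriz ((x, y), (x', y)) = true := by simp [stepHoriz]
    exact ⟨y, x, x' - x, by omega, by simp [this, linePt]⟩

theorem exists_linePt_of_straight {b : Bool} {g : List ((ℤ × ℤ) × (ℤ × ℤ))}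
    (hlink : g.IsChain fun s t => s.2 = t.1) (hunit : ∀ s ∈ g, unitStep s.1 s.2)
    (hb : ∀ s ∈ g, stepHoriz s = b)
    (hback : g.IsChain fun s t => s(s.1, s.2) ≠ s(t.1, t.2)) :
    ∃ c a σ : ℤ, (σ = 1 ∨ σ = -1) ∧ ∀ k (hk : k < g.length),
      g[k] = (linePt b c (a + σ * k), linePt b c (a + σ * (k + 1))) := by
  induction g with
  | nil => exact ⟨0, 0, 1, .inl rfl, fun k hk => absurd hk (Nat.not_lt_zero k)⟩
  | cons s g ih =>
    obtain ⟨c, a, σ, hσ, hs⟩ := exists_linePt_of_unitStep (hunit s List.mem_cons_self)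
    rw [hb s List.mem_cons_self] at hs
    cases g with
    | nil =>
      refine ⟨c, a, σ, hσ, fun k hk => ?_⟩
      obtain rfl : k = 0 := by simpa using hk
      simpa using hs
    | cons t g =>
      obtain ⟨c', a', σ', hσ', ht⟩ := ih hlink.tail
        (fun x hx => hunit x (List.mem_cons_of_mem _ hx))
        (fun x hx => hb x (List.mem_cons_of_mem _ hx)) hback.tail
      have ht0 : t = (linePt b c' a', linePt b c' (a' + σ')) := by
        simpa using ht 0 (List.length_pos_of_mem List.mem_cons_self)
      have hst : s.2 = t.1 := (List.isChain_cons_cons.1 hlink).1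
      have hrev : s(s.1, s.2) ≠ s(t.1, t.2) := (List.isChain_cons_cons.1 hback).1
      rw [hs, ht0] at hst hrev
      obtain ⟨rfl, rfl⟩ := linePt_inj.1 hst
      -- a step back would retrace the edge of the previous step
      obtain rfl : σ = σ' := by
        by_contra hne
        apply hrev
        rw [show a + σ + σ' = a by omega]
        exact Sym2.eq_swap
      refine ⟨c, a, σ, hσ, fun k hk => ?_⟩
      cases k with
      | zero => simpa using hs
      | succ k =>
        rw [List.getElem_cons_succ, ht k (by simpa using hk)]
        push_cast
        ring_nf

/-- A straight piece of grid path: it runs along the line `(horiz, line)` from the coordinate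
`start` to the coordinate `finish`. -/
structure Seg where
  horiz : Bool
  line : ℤ
  start : ℤ
  finish : ℤ

namespace Seg

def edges (s : Seg) : Set (Sym2 (ℤ × ℤ)) :=
  {e | ∃ x, min s.start s.finish ≤ x ∧ x < max s.start s.finish ∧ e = lineEdge s.horiz s.line x}

/-- `t` follows `s` around a bend, whose corner is `finish` on `s` and `start` on `t`. -/
def Turn (s t : Seg) : Prop := t.horiz = !s.horiz ∧ s.finish = t.line ∧ s.line = t.start

def ofRun (g : List ((ℤ × ℤ) × (ℤ × ℤ))) : Seg :=
  let b := stepHoriz (g.headD default)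
  ⟨b, coordAlong (!b) (g.headD default).1, coordAlong b (g.headD default).1,
    coordAlong b (g.getLastD default).2⟩

lemma lineEdge_mem_edges {s : Seg} {b : Bool} {c x : ℤ} :
    lineEdge b c x ∈ s.edges ↔
      s.horiz = b ∧ s.line = c ∧ min s.start s.finish ≤ x ∧ x < max s.start s.finish := by
  constructor
  · rintro ⟨x', h₁, h₂, he⟩
    obtain ⟨rfl, rfl, rfl⟩ := lineEdge_inj he
    exact ⟨rfl, rfl, h₁, h₂⟩
  · rintro ⟨rfl, rfl, h₁, h₂⟩
    exact ⟨x, h₁, h₂, rfl⟩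

lemma exists_lineEdge_mem_edges {s : Seg} (hs : s.start ≠ s.finish) {a : ℤ}
    (ha : a = s.start ∨ a = s.finish) :
    ∃ δ ∈ ({0, 1} : Finset ℤ), lineEdge s.horiz s.line (a - δ) ∈ s.edges := by
  simp only [lineEdge_mem_edges, true_and]
  by_cases hmin : a = min s.start s.finish
  · exact ⟨0, by simp, by omega⟩
  · exact ⟨1, by simp, by omega⟩

lemma mem_map_iff_mem_edges_of_linePt {g : List ((ℤ × ℤ) × (ℤ × ℤ))} {b : Bool} {c a σ : ℤ}
    (hσ : σ = 1 ∨ σ = -1) (hg : ∀ k (hk : k < g.length),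
      g[k] = (linePt b c (a + σ * k), linePt b c (a + σ * (k + 1)))) (e : Sym2 (ℤ × ℤ)) :
    e ∈ g.map (fun t => s(t.1, t.2)) ↔ e ∈ (⟨b, c, a, a + σ * g.length⟩ : Seg).edges := by
  simp only [List.mem_map, edges, Set.mem_ofPred_eq]
  constructor
  · rintro ⟨t, ht, rfl⟩
    obtain ⟨k, hk, rfl⟩ := List.mem_iff_getElem.1 ht
    rw [hg k hk]
    rcases hσ with rfl | rfl
    · refine ⟨a + k, by omega, by omega, ?_⟩
      rw [lineEdge]
      ring_nf
    · refine ⟨a - k - 1, by omega, by omega, ?_⟩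
      rw [lineEdge, Sym2.eq_swap]
      ring_nf
  · rintro ⟨x, hx₁, hx₂, rfl⟩
    rcases hσ with rfl | rfl
    · refine ⟨_, List.getElem_mem (n := (x - a).toNat) (by omega), ?_⟩
      rw [hg _ (by omega), lineEdge]
      simp only [Sym2.eq_iff, linePt_inj, true_and]
      omega
    · refine ⟨_, List.getElem_mem (n := (a - 1 - x).toNat) (by omega), ?_⟩
      rw [hg _ (by omega), lineEdge]
      simp only [Sym2.eq_iff, linePt_inj, true_and]
      omega

structure Traces (s : Seg) (g : List ((ℤ × ℤ) × (ℤ × ℤ))) : Prop where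
  start_ne_finish : s.start ≠ s.finish
  mem_map_iff : ∀ e, e ∈ g.map (fun t => s(t.1, t.2)) ↔ e ∈ s.edges
  stepHoriz_eq : ∀ t ∈ g, stepHoriz t = s.horiz
  head_fst : ∀ t ∈ g.head?, t.1 = linePt s.horiz s.line s.start
  getLast_snd : ∀ t ∈ g.getLast?, t.2 = linePt s.horiz s.line s.finish

theorem traces_ofRun {g : List ((ℤ × ℤ) × (ℤ × ℤ))} (hne : g ≠ [])
    (hlink : g.IsChain fun s t => s.2 = t.1) (hunit : ∀ s ∈ g, unitStep s.1 s.2)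
    (hb : ∀ s ∈ g, stepHoriz s = stepHoriz (g.head hne))
    (hback : g.IsChain fun s t => s(s.1, s.2) ≠ s(t.1, t.2)) :
    (ofRun g).Traces g := by
  set b := stepHoriz (g.head hne)
  obtain ⟨c, a, σ, hσ, hg⟩ := exists_linePt_of_straight hlink hunit hb hback
  have hlen : 0 < g.length := List.length_pos_iff.2 hne
  have hhead : g.head hne = (linePt b c a, linePt b c (a + σ)) := by
    simpa [List.head_eq_getElem] using hg 0 hlen
  have hlast : (g.getLast hne).2 = linePt b c (a + σ * g.length) := by
    rw [List.getLast_eq_getElem, hg _ (by omega)]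
    rw [show ((g.length - 1 : ℕ) : ℤ) + 1 = g.length by omega]
  have hrun : ofRun g = ⟨b, c, a, a + σ * g.length⟩ := by
    simp only [ofRun, List.headD_eq_head?_getD, List.getLastD_eq_getLast?,
      List.head?_eq_some_head hne, List.getLast?_eq_some_getLast hne, Option.getD_some, hlast]
    rw [hhead, stepHoriz_linePt b c a σ (by omega)]
    simp
  rw [hrun]
  refine ⟨by dsimp only; rcases hσ with rfl | rfl <;> omega,
    mem_map_iff_mem_edges_of_linePt hσ hg, hb, ?_, ?_⟩
  · simp [List.head?_eq_some_head hne, hhead]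
  · simp [List.getLast?_eq_some_getLast hne, hlast]

theorem Traces.turn {s t : Seg} {g g' : List ((ℤ × ℤ) × (ℤ × ℤ))} (hs : s.Traces g)
    (ht : t.Traces g') (hne : g ≠ []) (hne' : g' ≠ [])
    (hlink : (g.getLast hne).2 = (g'.head hne').1)
    (hbend : stepHoriz (g.getLast hne) ≠ stepHoriz (g'.head hne')) : s.Turn t := by
  rw [hs.stepHoriz_eq _ (List.getLast_mem hne), ht.stepHoriz_eq _ (List.head_mem hne')] at hbend
  have horiz : t.horiz = !s.horiz := by
    cases h : s.horiz <;> cases h' : t.horiz <;> simp_all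
  rw [hs.getLast_snd _ (List.getLast_mem_getLast? hne), ht.head_fst _ (List.head_mem_head? hne'),
    horiz] at hlink
  exact ⟨horiz, linePt_eq_linePt_not.1 hlink⟩

lemma length_filter_horiz_le_two {D : List Seg} (hD : D.IsChain Turn) (h3 : D.length ≤ 3)
    (b : Bool) : (D.filter (·.horiz = b)).length ≤ 2 := by
  match D, hD, h3 with
  | [], _, _ | [_], _, _ | [_, _], _, _ => exact (List.length_filter_le _ _).trans (by simp)
  | [x, y, z], hD, _ =>
    have : y.horiz = !x.horiz := (List.isChain_cons_cons.1 hD).1.1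
    cases hx : x.horiz <;> cases b <;> simp_all [List.filter_cons] <;> split <;> simp

lemma nodup_map_horiz_line {D : List Seg} (hD : D.IsChain Turn) (h3 : D.length ≤ 3)
    (hne : ∀ s ∈ D, s.start ≠ s.finish) : (D.map fun s => (s.horiz, s.line)).Nodup := by
  match D, hD, h3 with
  | [], _, _ | [_], _, _ => simp
  | [x, y], hD, _ =>
    have : y.horiz = !x.horiz := (List.isChain_cons_cons.1 hD).1.1
    cases hx : x.horiz <;> simp_all
  | [x, y, z], hD, _ =>
    rw [List.isChain_cons_cons, List.isChain_cons_cons] at hD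
    obtain ⟨⟨hxy, -, hxl⟩, ⟨hyz, hyl, -⟩, -⟩ := hD
    have := hne y (by simp)
    simp [hxy, hyz, ← hyl, hxl, this]

end Seg

namespace GridPath

variable (Q : GridPath)

def segList : List Seg := Q.segs.map Seg.ofRun

@[simp] lemma length_segList : Q.segList.length = Q.segs.length := List.length_map _

lemma segs_flatten : Q.segs.flatten = Q.steps := List.flatten_splitBy _ _

lemma traces_ofRun {g : List ((ℤ × ℤ) × (ℤ × ℤ))} (hg : g ∈ Q.segs) :
    (Seg.ofRun g).Traces g := by
  have hne : g ≠ [] := List.ne_nil_of_mem_splitBy hg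
  have hinf : g <:+: Q.steps := Q.segs_flatten ▸ List.infix_of_mem_flatten hg
  have hnodup : (g.map fun t => s(t.1, t.2)).Nodup := (hinf.map _).sublist.nodup Q.edges_nodup
  refine Seg.traces_ofRun hne ((List.isChain_zip_tail _).infix hinf)
    (fun s hs => Q.chain.rel_of_mem_zip_tail s (hinf.mem hs)) ?_
    (List.pairwise_map.1 hnodup).isChain
  exact (List.isChain_of_mem_splitBy hg).induction _ _
    (fun x y hxy hx => by simp_all) (fun _ => rfl)

lemma length_segList_le : Q.segList.length ≤ Q.bends + 1 := by
  rw [length_segList]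
  exact List.length_splitBy_le _ Q.steps

lemma start_ne_finish {s : Seg} (hs : s ∈ Q.segList) : s.start ≠ s.finish := by
  obtain ⟨g, hg, rfl⟩ := List.mem_map.1 hs
  exact (Q.traces_ofRun hg).start_ne_finish

lemma mem_segEdges_iff {i : ℕ} (hi : i < Q.segList.length) (e : Sym2 (ℤ × ℤ)) :
    e ∈ segEdges Q i ↔ e ∈ Q.segList[i].edges := by
  rw [length_segList] at hi
  rw [segEdges, List.getD_eq_getElem _ _ hi]
  simp only [segList, List.getElem_map]
  exact (Q.traces_ofRun (List.getElem_mem hi)).mem_map_iff e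

lemma mem_edges_iff (e : Sym2 (ℤ × ℤ)) : e ∈ Q.edges ↔ ∃ s ∈ Q.segList, e ∈ s.edges := by
  rw [edges, ← Q.segs_flatten, List.map_flatten, List.mem_flatten]
  simp only [segList, List.mem_map]
  constructor
  · rintro ⟨_, ⟨g, hg, rfl⟩, he⟩
    exact ⟨_, ⟨g, hg, rfl⟩, ((Q.traces_ofRun hg).mem_map_iff e).1 he⟩
  · rintro ⟨_, ⟨g, hg, rfl⟩, he⟩
    exact ⟨_, ⟨g, hg, rfl⟩, ((Q.traces_ofRun hg).mem_map_iff e).2 he⟩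

lemma isChain_turn_segList : Q.segList.IsChain Seg.Turn := by
  rw [segList, List.isChain_map, List.isChain_iff_getElem]
  intro i hi
  have hsteps : Q.segs.flatten.IsChain fun s t => s.2 = t.1 := by
    rw [Q.segs_flatten]
    exact List.isChain_zip_tail Q.pts
  have hlink := ((List.isChain_flatten (List.nil_notMem_splitBy _ _)).1 hsteps).2
  have hbend := List.isChain_getLast_head_splitBy (fun s t => stepHoriz s == stepHoriz t) Q.steps
  rw [List.isChain_iff_getElem] at hlink hbend
  obtain ⟨hne, hne', hb⟩ := hbend i hi
  rw [beq_eq_false_iff_ne] at hb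
  exact (Q.traces_ofRun (List.getElem_mem _)).turn (Q.traces_ofRun (List.getElem_mem _)) hne hne'
    (hlink i hi _ (List.getLast_mem_getLast? hne) _ (List.head_mem_head? hne')) hb

def lines (b : Bool) : Finset ℤ := ((Q.segList.filter (·.horiz = b)).map (·.line)).toFinset

lemma mem_lines_of_lineEdge_mem {b : Bool} {c x : ℤ} (he : lineEdge b c x ∈ Q.edges) :
    c ∈ Q.lines b := by
  obtain ⟨s, hs, he⟩ := (Q.mem_edges_iff _).1 he
  obtain ⟨rfl, rfl, -⟩ := Seg.lineEdge_mem_edges.1 he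
  simp only [lines, List.mem_toFinset, List.mem_map, List.mem_filter]
  exact ⟨s, ⟨hs, by simp⟩, rfl⟩

variable {Q}

lemma card_lines_le_two (hQ : Q.bends ≤ 2) (b : Bool) : (Q.lines b).card ≤ 2 :=
  (List.toFinset_card_le _).trans <| (List.length_map _).trans_le <|
    Seg.length_filter_horiz_le_two Q.isChain_turn_segList (by have := Q.length_segList_le; omega) b

lemma card_lines_add_card_lines_le (hQ : Q.bends ≤ 2) :
    (Q.lines true).card + (Q.lines false).card ≤ 3 := by
  have htrue := (List.toFinset_card_le ((Q.segList.filter (·.horiz = true)).map (·.line)))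
  have hfalse := (List.toFinset_card_le ((Q.segList.filter (·.horiz = false)).map (·.line)))
  have hsum := List.length_eq_length_filter_add (l := Q.segList) (·.horiz = true)
  have := Q.length_segList_le
  simp only [List.length_map, ← decide_not, Bool.not_eq_true] at htrue hfalse hsum
  simp only [lines]
  omega

lemma exists_Ico_of_bends_le_two (hQ : Q.bends ≤ 2) (b : Bool) (c : ℤ) :
    ∃ A B : ℤ, ∀ x, lineEdge b c x ∈ Q.edges ↔ A ≤ x ∧ x < B := by
  by_cases hline : ∃ s ∈ Q.segList, s.horiz = b ∧ s.line = c
  · obtain ⟨s, hs, rfl, rfl⟩ := hline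
    have hinj := List.inj_on_of_nodup_map (Seg.nodup_map_horiz_line Q.isChain_turn_segList
      (by have := Q.length_segList_le; omega) fun _ => Q.start_ne_finish)
    refine ⟨min s.start s.finish, max s.start s.finish, fun x => ?_⟩
    rw [mem_edges_iff]
    constructor
    · rintro ⟨s', hs', he⟩
      obtain ⟨hb, hc, hx⟩ := Seg.lineEdge_mem_edges.1 he
      obtain rfl : s' = s := hinj hs' hs (by rw [hb, hc])
      exact hx
    · exact fun hx => ⟨s, hs, Seg.lineEdge_mem_edges.2 ⟨rfl, rfl, hx⟩⟩
  · refine ⟨0, 0, fun x => ⟨fun he => ?_, by omega⟩⟩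
    obtain ⟨s, hs, he⟩ := (Q.mem_edges_iff _).1 he
    obtain ⟨hb, hc, -⟩ := Seg.lineEdge_mem_edges.1 he
    exact absurd ⟨s, hs, hb, hc⟩ hline

end GridPath

def Bridges (Pu Pv Pw : GridPath) (b : Bool) (c : ℤ) : Prop :=
  ∃ x₁ x₂, lineEdge b c x₁ ∈ Pu.edges ∧ lineEdge b c x₂ ∈ Pv.edges ∧
    ∀ x, min x₁ x₂ ≤ x → x ≤ max x₁ x₂ → lineEdge b c x ∈ Pw.edges

/-- Both bridges contain the last edge before the gap between the two intervals. -/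
lemma Bridges.exists_common_edge {Pu Pv W W' : GridPath} {b : Bool} {c : ℤ}
    (hUV : ∀ e ∈ Pu.edges, e ∉ Pv.edges)
    (hu : ∃ A B : ℤ, ∀ x, lineEdge b c x ∈ Pu.edges ↔ A ≤ x ∧ x < B)
    (hv : ∃ A B : ℤ, ∀ x, lineEdge b c x ∈ Pv.edges ↔ A ≤ x ∧ x < B)
    (h : Bridges Pu Pv W b c) (h' : Bridges Pu Pv W' b c) :
    ∃ e ∈ W.edges, e ∈ W'.edges := by
  obtain ⟨Au, Bu, hu⟩ := hu
  obtain ⟨Av, Bv, hv⟩ := hv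
  obtain ⟨x₁, x₂, hx₁, hx₂, hW⟩ := h
  obtain ⟨y₁, y₂, hy₁, hy₂, hW'⟩ := h'
  rw [hu] at hx₁ hy₁
  rw [hv] at hx₂ hy₂
  have hgap : Bu ≤ Av ∨ Bv ≤ Au := by
    by_contra! hov
    exact hUV _ ((hu (max Au Av)).2 (by omega)) ((hv (max Au Av)).2 (by omega))
  rcases hgap with hgap | hgap
  · exact ⟨_, hW (Bu - 1) (by omega) (by omega), hW' (Bu - 1) (by omega) (by omega)⟩
  · exact ⟨_, hW (Bv - 1) (by omega) (by omega), hW' (Bv - 1) (by omega) (by omega)⟩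

/-- How a close realizer `Pw` is pinned down relative to `Pu` and `Pv`: by a common line it
bridges, or by a grid edge it must use. -/
abbrev Tag := (Bool × ℤ) ⊕ Sym2 (ℤ × ℤ)

def IsTagOf (Pu Pv Pw : GridPath) : Tag → Prop
  | .inl (b, c) => Bridges Pu Pv Pw b c
  | .inr e => e ∈ Pw.edges

lemma IsTagOf.exists_common_edge {Pu Pv W W' : GridPath} {t : Tag} (hPu : Pu.bends ≤ 2)
    (hPv : Pv.bends ≤ 2) (hUV : ∀ e ∈ Pu.edges, e ∉ Pv.edges) (h : IsTagOf Pu Pv W t)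
    (h' : IsTagOf Pu Pv W' t) : ∃ e ∈ W.edges, e ∈ W'.edges :=
  match t with
  | .inl (b, c) => Bridges.exists_common_edge hUV (Pu.exists_Ico_of_bends_le_two hPu b c)
      (Pv.exists_Ico_of_bends_le_two hPv b c) h h'
  | .inr e => ⟨e, h, h'⟩

/-- `lineEdge b c (c' - δ)` for `δ ∈ {0, 1}` are the two edges of the line `(b, c)` at its
crossing with the line `(!b, c')`. -/
def tagSet (Lu Lv : Bool → Finset ℤ) : Finset Tag :=
  Finset.univ.biUnion fun b =>
    (Lu b ∩ Lv b).image (fun c => .inl (b, c)) ∪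
      ((Lu b ×ˢ Lv (!b)) ×ˢ ({0, 1} : Finset ℤ)).image
        fun p => .inr (lineEdge b p.1.1 (p.1.2 - p.2))

lemma card_tagSet_le (Lu Lv : Bool → Finset ℤ) :
    (tagSet Lu Lv).card ≤ ∑ b, ((Lu b ∩ Lv b).card + (Lu b).card * (Lv (!b)).card * 2) := by
  refine Finset.card_biUnion_le.trans (Finset.sum_le_sum fun b _ => ?_)
  refine (Finset.card_union_le _ _).trans (add_le_add Finset.card_image_le ?_)
  refine Finset.card_image_le.trans_eq ?_
  simp [Finset.card_product]

lemma card_tagSet_le_twelve {Lu Lv : Bool → Finset ℤ} (hu : ∀ b, (Lu b).card ≤ 2)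
    (hu' : (Lu true).card + (Lu false).card ≤ 3) (hv : ∀ b, (Lv b).card ≤ 2)
    (hv' : (Lv true).card + (Lv false).card ≤ 3) : (tagSet Lu Lv).card ≤ 12 := by
  refine (card_tagSet_le Lu Lv).trans ?_
  simp only [Fintype.sum_bool, Bool.not_true, Bool.not_false]
  have h₁ := Finset.card_le_card (Finset.inter_subset_left (s₁ := Lu true) (s₂ := Lv true))
  have h₂ := Finset.card_le_card (Finset.inter_subset_right (s₁ := Lu true) (s₂ := Lv true))
  have h₃ := Finset.card_le_card (Finset.inter_subset_left (s₁ := Lu false) (s₂ := Lv false))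
  have h₄ := Finset.card_le_card (Finset.inter_subset_right (s₁ := Lu false) (s₂ := Lv false))
  have := hu true; have := hu false; have := hv true; have := hv false
  generalize (Lu true).card = a, (Lu false).card = a', (Lv true).card = d, (Lv false).card = d'
    at *
  interval_cases a <;> interval_cases a' <;> interval_cases d <;> interval_cases d' <;> omega

section CloseRealizer

variable {Pu Pv Pw : GridPath}

lemma exists_tag_of_mem_seg {s : Seg} (hsW : ∀ e ∈ s.edges, e ∈ Pw.edges)
    {eu ev : Sym2 (ℤ × ℤ)} (heu : eu ∈ Pu.edges) (hus : eu ∈ s.edges) (hev : ev ∈ Pv.edges)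
    (hvs : ev ∈ s.edges) : ∃ t ∈ tagSet Pu.lines Pv.lines, IsTagOf Pu Pv Pw t := by
  obtain ⟨x₁, hx₁, hx₁', rfl⟩ := hus
  obtain ⟨x₂, hx₂, hx₂', rfl⟩ := hvs
  refine ⟨.inl (s.horiz, s.line), ?_,
    x₁, x₂, heu, hev, fun x h h' => hsW _ ⟨x, by omega, by omega, rfl⟩⟩
  simp only [tagSet, Finset.mem_biUnion, Finset.mem_univ, true_and]
  exact ⟨s.horiz, Finset.mem_union_left _ (Finset.mem_image_of_mem _ (Finset.mem_inter.2
    ⟨Pu.mem_lines_of_lineEdge_mem heu, Pv.mem_lines_of_lineEdge_mem hev⟩))⟩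

lemma exists_tag_of_corner {s : Seg} (hs : s.start ≠ s.finish)
    (hsW : ∀ e ∈ s.edges, e ∈ Pw.edges) {a : ℤ} (ha : a = s.start ∨ a = s.finish) {x₁ x₂ : ℤ}
    (hu : lineEdge s.horiz s.line x₁ ∈ Pu.edges) (hv : lineEdge (!s.horiz) a x₂ ∈ Pv.edges) :
    ∃ t ∈ tagSet Pu.lines Pv.lines, IsTagOf Pu Pv Pw t := by
  obtain ⟨δ, hδ, he⟩ := s.exists_lineEdge_mem_edges hs ha
  refine ⟨.inr _, ?_, hsW _ he⟩
  simp only [tagSet, Finset.mem_biUnion, Finset.mem_univ, true_and]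
  refine ⟨s.horiz, Finset.mem_union_right _ (Finset.mem_image.2 ⟨((s.line, a), δ), ?_, rfl⟩)⟩
  exact Finset.mem_product.2 ⟨Finset.mem_product.2
    ⟨Pu.mem_lines_of_lineEdge_mem hu, Pv.mem_lines_of_lineEdge_mem hv⟩, hδ⟩

lemma exists_tag_of_mem_segList {i j : ℕ} (hi : i < Pw.segList.length)
    (hj : j < Pw.segList.length) (hij : i = j ∨ i + 1 = j ∨ j + 1 = i) {eu ev : Sym2 (ℤ × ℤ)}
    (heu : eu ∈ Pu.edges) (hui : eu ∈ Pw.segList[i].edges) (hev : ev ∈ Pv.edges)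
    (hvj : ev ∈ Pw.segList[j].edges) : ∃ t ∈ tagSet Pu.lines Pv.lines, IsTagOf Pu Pv Pw t := by
  have hW : ∀ k (hk : k < Pw.segList.length), ∀ e ∈ Pw.segList[k].edges, e ∈ Pw.edges :=
    fun k hk e he => (Pw.mem_edges_iff e).2 ⟨_, List.getElem_mem hk, he⟩
  have hturn : ∀ k (hk : k + 1 < Pw.segList.length), Pw.segList[k].Turn Pw.segList[k + 1] :=
    List.isChain_iff_getElem.1 Pw.isChain_turn_segList
  rcases hij with rfl | rfl | rfl
  · exact exists_tag_of_mem_seg (hW i hi) heu hui hev hvj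
  · obtain ⟨x₁, -, -, rfl⟩ := hui
    obtain ⟨x₂, -, -, rfl⟩ := hvj
    obtain ⟨hhoriz, hcorner, -⟩ := hturn i hj
    rw [hhoriz, ← hcorner] at hev
    exact exists_tag_of_corner (Pw.start_ne_finish (List.getElem_mem hi)) (hW i hi) (.inr rfl)
      heu hev
  · obtain ⟨x₁, -, -, rfl⟩ := hui
    obtain ⟨x₂, -, -, rfl⟩ := hvj
    obtain ⟨hhoriz, -, hcorner⟩ := hturn j hi
    rw [← Bool.not_not Pw.segList[j].horiz, ← hhoriz, hcorner] at hev
    exact exists_tag_of_corner (Pw.start_ne_finish (List.getElem_mem hi)) (hW _ hi) (.inl rfl)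
      heu hev

theorem exists_tag_of_realizesOnCloseSegments (hreal : RealizesOnCloseSegments Pw Pu Pv)
    (hu : ∃ e ∈ Pu.edges, e ∈ Pw.edges) (hv : ∃ e ∈ Pv.edges, e ∈ Pw.edges) :
    ∃ t ∈ tagSet Pu.lines Pv.lines, IsTagOf Pu Pv Pw t := by
  obtain ⟨i, j, hi, hj, hij, hall⟩ := hreal
  obtain ⟨eu, heu, heuW⟩ := hu
  obtain ⟨ev, hev, hevW⟩ := hv
  rw [← GridPath.length_segList] at hi hj
  have hu' := hall eu heuW (.inl heu)
  have hv' := hall ev hevW (.inr hev)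
  rw [Pw.mem_segEdges_iff hi, Pw.mem_segEdges_iff hj] at hu' hv'
  rcases hu' with hu' | hu' <;> rcases hv' with hv' | hv'
  · exact exists_tag_of_mem_segList hi hi (.inl rfl) heu hu' hev hv'
  · exact exists_tag_of_mem_segList hi hj hij heu hu' hev hv'
  · exact exists_tag_of_mem_segList hj hi (by omega) heu hu' hev hv'
  · exact exists_tag_of_mem_segList hj hj (.inl rfl) heu hu' hev hv'

end CloseRealizer

/-- In any 2-bend EPG representation of `K_{2,n}`, at most 12 vertices of the `n`-class
realize both of their edges on the same or two consecutive segments of their path. -/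
theorem K2n_few_close_realizers (n : ℕ)
    (P : (Fin 2) ⊕ (Fin n) → GridPath)
    (hrep : IsEPGRep (completeBipartiteGraph (Fin 2) (Fin n)) P)
    (hbend : ∀ x, (P x).bends ≤ 2) :
    {w : Fin n |
        RealizesOnCloseSegments (P (Sum.inr w)) (P (Sum.inl 0)) (P (Sum.inl 1))}.ncard
      ≤ 12 := by
  classical
  have hshare : ∀ a w, ∃ e ∈ (P (.inl a)).edges, e ∈ (P (.inr w)).edges := fun a w => by
    simpa using (hrep (.inl a) (.inr w) (by simp)).1 (by simp)
  have hUV : ∀ e ∈ (P (.inl 0)).edges, e ∉ (P (.inl 1)).edges := fun e h₀ h₁ => by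
    simpa using (hrep (.inl 0) (.inl 1) (by simp)).2 ⟨e, h₀, h₁⟩
  have hWW : ∀ w w', w ≠ w' → ∀ e ∈ (P (.inr w)).edges, e ∉ (P (.inr w')).edges :=
    fun w w' hne e h h' => by simpa using (hrep (.inr w) (.inr w') (by simpa)).2 ⟨e, h, h'⟩
  rw [Set.ncard_eq_toFinset_card']
  calc _ ≤ (tagSet (P (.inl 0)).lines (P (.inl 1)).lines).card :=
        Finset.card_le_card_of_forall_subsingleton (fun w t => IsTagOf _ _ (P (.inr w)) t)
          (fun w hw => exists_tag_of_realizesOnCloseSegments (by simpa using hw)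
            (hshare 0 w) (hshare 1 w))
          (fun t _ w hw w' hw' => by
            by_contra hne
            obtain ⟨e, he, he'⟩ := hw.2.exists_common_edge (hbend _) (hbend _) hUV hw'.2
            exact hWW w w' hne e he he')
    _ ≤ 12 := card_tagSet_le_twelve (GridPath.card_lines_le_two (hbend _))
        (GridPath.card_lines_add_card_lines_le (hbend _)) (GridPath.card_lines_le_two (hbend _))
        (GridPath.card_lines_add_card_lines_le (hbend _))
end

section
/- In any rectangle representation of a plane near-triangulation, every inner triangular face {u,v,w} corresponds to a unique point of the plane, namely the single point of the common intersection R(u) ∩ R(v) ∩ R(w). -/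
/-- The list of boundary edges of a face given as a cyclic vertex list. -/
def cycleEdges {V : Type} (f : List V) : List (Sym2 V) :=
  (f.zip (f.rotate 1)).map (fun p => Sym2.mk p.1 p.2)

/-- A combinatorial plane embedding of a 2-connected-like plane graph:
faces are boundary cycles, every edge lies on exactly two faces, and Euler's formula holds. -/
structure PlaneGraphData (V : Type) [Fintype V] [DecidableEq V] where
  G : SimpleGraph V
  faces : Finset (List V)
  outer : List V
  outer_mem : outer ∈ faces
  face_cycle : ∀ f ∈ faces, f.Nodup ∧ 3 ≤ f.length ∧ ∀ e ∈ cycleEdges f, e ∈ G.edgeSet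
  edge_two_faces : ∀ e ∈ G.edgeSet, (faces.filter (fun f => e ∈ cycleEdges f)).card = 2
  connected : G.Connected
  euler : Fintype.card V + faces.card = G.edgeSet.ncard + 2

/-- `{a,b,c}` is a separating triangle of `G`. -/
def SepTriangle {V : Type} (G : SimpleGraph V) (a b c : V) : Prop :=
  G.Adj a b ∧ G.Adj b c ∧ G.Adj a c ∧
    ¬ (G.induce {v | v ≠ a ∧ v ≠ b ∧ v ≠ c}).Preconnected

/-- A plane non-separating near-triangulation: at least 4 vertices, no separating
triangle, all inner faces triangles, outer face a quadrangle. -/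
def IsNST {V : Type} [Fintype V] [DecidableEq V] (P : PlaneGraphData V) : Prop :=
  4 ≤ Fintype.card V ∧
  (∀ a b c : V, ¬ SepTriangle P.G a b c) ∧
  (∀ f ∈ P.faces, f ≠ P.outer → f.length = 3) ∧
  P.outer.length = 4

/-- An axis-aligned rectangle (product of two nondegenerate closed intervals). -/
structure Rect where
  x1 : ℝ
  x2 : ℝ
  y1 : ℝ
  y2 : ℝ
  hx : x1 < x2
  hy : y1 < y2

/-- The closed rectangle as a subset of the plane. -/
def Rect.set (R : Rect) : Set (ℝ × ℝ) := Set.Icc R.x1 R.x2 ×ˢ Set.Icc R.y1 R.y2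

/-- The open interior of the rectangle. -/
def Rect.inter (R : Rect) : Set (ℝ × ℝ) := Set.Ioo R.x1 R.x2 ×ˢ Set.Ioo R.y1 R.y2

/-- A rectangle representation of a plane graph: pairwise disjoint interiors, any two
rectangles disjoint or meeting in a segment of positive length, and contact iff adjacency. -/
def IsRectRep {V : Type} [Fintype V] [DecidableEq V] (P : PlaneGraphData V)
    (R : V → Rect) : Prop :=
  (∀ v w : V, v ≠ w → Disjoint (R v).inter (R w).inter) ∧
  (∀ v w : V, v ≠ w → (R v).set ∩ (R w).set = ∅ ∨
    ∃ p q : ℝ × ℝ, p ≠ q ∧ (R v).set ∩ (R w).set = segment ℝ p q) ∧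
  (∀ v w : V, v ≠ w → (((R v).set ∩ (R w).set).Nonempty ↔ P.G.Adj v w))

/-
Project onto the two axes. If the three rectangles had an `x`-overlap of positive length, their
`x`-interiors would overlap pairwise, so disjointness of the interiors would force their
`y`-interiors to be pairwise disjoint; but three nondegenerate intervals with pairwise disjoint
interiors cannot pairwise touch. Hence the common `x`-range, nonempty by Helly's theorem on the
line, is a point, and likewise the common `y`-range.
-/

open Set

section Intervals

variable {α : Type*} [LinearOrder α]

theorem Icc_inter_Icc_inter_Icc_nonempty {a₁ b₁ a₂ b₂ a₃ b₃ : α}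
    (h₁₂ : (Icc a₁ b₁ ∩ Icc a₂ b₂).Nonempty) (h₁₃ : (Icc a₁ b₁ ∩ Icc a₃ b₃).Nonempty)
    (h₂₃ : (Icc a₂ b₂ ∩ Icc a₃ b₃).Nonempty) :
    (Icc a₁ b₁ ∩ Icc a₂ b₂ ∩ Icc a₃ b₃).Nonempty := by
  simp only [Icc_inter_Icc, nonempty_Icc, sup_le_iff, le_inf_iff] at *
  grind

variable [DenselyOrdered α]

theorem not_disjoint_Ioo_of_nontrivial_Icc_inter_Icc {a₁ b₁ a₂ b₂ : α}
    (h : (Icc a₁ b₁ ∩ Icc a₂ b₂).Nontrivial) : ¬Disjoint (Ioo a₁ b₁) (Ioo a₂ b₂) := by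
  obtain ⟨x, ⟨⟨hx₁, hx₁'⟩, hx₂, hx₂'⟩, y, ⟨⟨hy₁, hy₁'⟩, hy₂, hy₂'⟩, hxy⟩ := h
  rw [Ioo_disjoint_Ioo, not_le, max_lt_iff, lt_min_iff, lt_min_iff]
  rcases hxy.lt_or_gt with hxy | hxy <;> exact ⟨⟨by order, by order⟩, by order, by order⟩

theorem not_pairwise_disjoint_Ioo_of_pairwise_Icc_inter_nonempty {a₁ b₁ a₂ b₂ a₃ b₃ : α}
    (h₁ : a₁ < b₁) (h₂ : a₂ < b₂) (h₃ : a₃ < b₃)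
    (h₁₂ : (Icc a₁ b₁ ∩ Icc a₂ b₂).Nonempty) (h₁₃ : (Icc a₁ b₁ ∩ Icc a₃ b₃).Nonempty)
    (h₂₃ : (Icc a₂ b₂ ∩ Icc a₃ b₃).Nonempty) :
    ¬(Disjoint (Ioo a₁ b₁) (Ioo a₂ b₂) ∧ Disjoint (Ioo a₁ b₁) (Ioo a₃ b₃) ∧
      Disjoint (Ioo a₂ b₂) (Ioo a₃ b₃)) := by
  simp only [Ioo_disjoint_Ioo, Icc_inter_Icc, nonempty_Icc, sup_le_iff, le_inf_iff,
    min_le_iff, le_max_iff] at *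
  grind

end Intervals

namespace Rect

def Touches (S T : Rect) : Prop :=
  Disjoint S.inter T.inter ∧ (S.set ∩ T.set).Nonempty

def swap (R : Rect) : Rect := ⟨R.y1, R.y2, R.x1, R.x2, R.hy, R.hx⟩

variable {R₁ R₂ R₃ S T : Rect}

theorem disjoint_inter_iff : Disjoint S.inter T.inter ↔
    Disjoint (Ioo S.x1 S.x2) (Ioo T.x1 T.x2) ∨ Disjoint (Ioo S.y1 S.y2) (Ioo T.y1 T.y2) :=
  disjoint_prod

theorem set_inter_nonempty_iff : (S.set ∩ T.set).Nonempty ↔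
    (Icc S.x1 S.x2 ∩ Icc T.x1 T.x2).Nonempty ∧ (Icc S.y1 S.y2 ∩ Icc T.y1 T.y2).Nonempty := by
  rw [set, set, prod_inter_prod, prod_nonempty_iff]

theorem Touches.swap (h : S.Touches T) : S.swap.Touches T.swap :=
  ⟨disjoint_inter_iff.2 (disjoint_inter_iff.1 h.1).symm,
    set_inter_nonempty_iff.2 (set_inter_nonempty_iff.1 h.2).symm⟩

theorem Touches.disjoint_Ioo_y (h : S.Touches T)
    (hx : (Icc S.x1 S.x2 ∩ Icc T.x1 T.x2).Nontrivial) :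
    Disjoint (Ioo S.y1 S.y2) (Ioo T.y1 T.y2) :=
  (disjoint_inter_iff.1 h.1).resolve_left (not_disjoint_Ioo_of_nontrivial_Icc_inter_Icc hx)

theorem set_inter_set_inter_set :
    R₁.set ∩ R₂.set ∩ R₃.set = (Icc R₁.x1 R₁.x2 ∩ Icc R₂.x1 R₂.x2 ∩ Icc R₃.x1 R₃.x2) ×ˢ
      (Icc R₁.y1 R₁.y2 ∩ Icc R₂.y1 R₂.y2 ∩ Icc R₃.y1 R₃.y2) := by
  simp only [set, prod_inter_prod]

theorem Icc_x_inter_subsingleton (h₁₂ : R₁.Touches R₂) (h₁₃ : R₁.Touches R₃)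
    (h₂₃ : R₂.Touches R₃) :
    (Icc R₁.x1 R₁.x2 ∩ Icc R₂.x1 R₂.x2 ∩ Icc R₃.x1 R₃.x2).Subsingleton := by
  intro x hx y hy
  by_contra hxy
  have hx₁₂ : (Icc R₁.x1 R₁.x2 ∩ Icc R₂.x1 R₂.x2).Nontrivial :=
    ⟨x, hx.1, y, hy.1, hxy⟩
  have hx₁₃ : (Icc R₁.x1 R₁.x2 ∩ Icc R₃.x1 R₃.x2).Nontrivial :=
    ⟨x, ⟨hx.1.1, hx.2⟩, y, ⟨hy.1.1, hy.2⟩, hxy⟩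
  have hx₂₃ : (Icc R₂.x1 R₂.x2 ∩ Icc R₃.x1 R₃.x2).Nontrivial :=
    ⟨x, ⟨hx.1.2, hx.2⟩, y, ⟨hy.1.2, hy.2⟩, hxy⟩
  exact not_pairwise_disjoint_Ioo_of_pairwise_Icc_inter_nonempty R₁.hy R₂.hy R₃.hy
    (set_inter_nonempty_iff.1 h₁₂.2).2 (set_inter_nonempty_iff.1 h₁₃.2).2
    (set_inter_nonempty_iff.1 h₂₃.2).2
    ⟨h₁₂.disjoint_Ioo_y hx₁₂, h₁₃.disjoint_Ioo_y hx₁₃, h₂₃.disjoint_Ioo_y hx₂₃⟩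

theorem exists_Icc_x_inter_eq_singleton (h₁₂ : R₁.Touches R₂) (h₁₃ : R₁.Touches R₃)
    (h₂₃ : R₂.Touches R₃) :
    ∃ x, Icc R₁.x1 R₁.x2 ∩ Icc R₂.x1 R₂.x2 ∩ Icc R₃.x1 R₃.x2 = {x} :=
  exists_eq_singleton_iff_nonempty_subsingleton.2
    ⟨Icc_inter_Icc_inter_Icc_nonempty (set_inter_nonempty_iff.1 h₁₂.2).1
      (set_inter_nonempty_iff.1 h₁₃.2).1 (set_inter_nonempty_iff.1 h₂₃.2).1,
    Icc_x_inter_subsingleton h₁₂ h₁₃ h₂₃⟩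

theorem exists_set_inter_set_inter_set_eq_singleton (h₁₂ : R₁.Touches R₂)
    (h₁₃ : R₁.Touches R₃) (h₂₃ : R₂.Touches R₃) :
    ∃ p, R₁.set ∩ R₂.set ∩ R₃.set = {p} := by
  obtain ⟨x, hx⟩ := exists_Icc_x_inter_eq_singleton h₁₂ h₁₃ h₂₃
  obtain ⟨y, hy : Icc R₁.y1 R₁.y2 ∩ Icc R₂.y1 R₂.y2 ∩ Icc R₃.y1 R₃.y2 = {y}⟩ :=
    exists_Icc_x_inter_eq_singleton h₁₂.swap h₁₃.swap h₂₃.swap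
  exact ⟨(x, y), by rw [set_inter_set_inter_set, hx, hy, singleton_prod_singleton]⟩

end Rect

theorem PlaneGraphData.adj_of_triangle_mem_faces {V : Type} [Fintype V] [DecidableEq V]
    (P : PlaneGraphData V) {u v w : V} (hf : [u, v, w] ∈ P.faces) :
    P.G.Adj u v ∧ P.G.Adj v w ∧ P.G.Adj w u := by
  have hedges := (P.face_cycle _ hf).2.2
  simp only [cycleEdges, List.rotate, List.mem_map] at hedges
  exact ⟨hedges s(u, v) ⟨(u, v), by simp⟩, hedges s(v, w) ⟨(v, w), by simp⟩,
    hedges s(w, u) ⟨(w, u), by simp⟩⟩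

theorem IsRectRep.touches {V : Type} [Fintype V] [DecidableEq V] {P : PlaneGraphData V}
    {R : V → Rect} (hR : IsRectRep P R) {v w : V} (h : P.G.Adj v w) : (R v).Touches (R w) :=
  ⟨hR.1 v w h.ne, (hR.2.2 v w h.ne).2 h⟩

theorem inner_face_single_point_general
    {V : Type} [Fintype V] [DecidableEq V] (P : PlaneGraphData V)
    (R : V → Rect) (hR : IsRectRep P R) :
    ∀ f ∈ P.faces, f ≠ P.outer → ∀ u v w : V, f = [u, v, w] →
      ∃ p : ℝ × ℝ, (R u).set ∩ (R v).set ∩ (R w).set = {p} := by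
  rintro f hf - u v w rfl
  obtain ⟨huv, hvw, hwu⟩ := P.adj_of_triangle_mem_faces hf
  exact Rect.exists_set_inter_set_inter_set_eq_singleton (hR.touches huv)
    (hR.touches hwu.symm) (hR.touches hvw)

/-- In any rectangle representation of a plane near-triangulation, each inner
(triangular) face corresponds to a unique point, the single point of the common
intersection of its three rectangles. -/
theorem inner_face_single_point
    {V : Type} [Fintype V] [DecidableEq V] (P : PlaneGraphData V)
    (hnt : ∀ f ∈ P.faces, f ≠ P.outer → f.length = 3)
    (R : V → Rect) (hR : IsRectRep P R) :
    ∀ f ∈ P.faces, f ≠ P.outer → ∀ u v w : V, f = [u, v, w] →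
      ∃ p : ℝ × ℝ, (R u).set ∩ (R v).set ∩ (R w).set = {p} :=
  inner_face_single_point_general P R hR
end
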